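/- Let Σ be either ℝ² or the open half-plane {(x,y) ∈ ℝ² : y > 0}, and let G be a subgroup of O(2) whose action preserves Σ. Let u be a nontrivial C² solution of −Δu = u in Σ, satisfying u = 0 on ∂Σ when Σ is the half-plane. Then the G-Morse index of u is infinite: for every m ∈ ℕ there exist m linearly independent G-invariant functions v₁, …, v_m ∈ C_c^∞(Σ) with ∫_Σ (|∇v_i|² − v_i²) dx < 0 for each i = 1, …, m. -/

import Mathlib

open Real MeasureTheory Metric Set Asymptotics

noncomputable section

abbrev Plane : Type := EuclideanSpace ℝ (Fin 2)

/-- The Laplacian of a function on the plane. -/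
def lap (u : Plane → ℝ) (x : Plane) : ℝ :=
  ∑ i : Fin 2,
    fderiv ℝ (fun y => fderiv ℝ u y (EuclideanSpace.single i 1)) x (EuclideanSpace.single i 1)

/-- The open upper half-plane. -/
def halfPlane : Set Plane := {x : Plane | 0 < x 1}

/-!
For a compactly supported profile `F` on `ℝᵈ`, the dilate `F (x / R)` has
`∫ ‖∇v‖² - v² = Rᵈ (R⁻² ∫ ‖∇F‖² - ∫ F²)`, which is negative once `R` is large. If `F` is
supported in the annulus `1 < ‖x‖ < 4`, the dilates by `R₀ 4ⁿ` have pairwise disjoint supports,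
hence are linearly independent. Dilations commute with linear maps, so `G`-invariance and the
support condition only have to be checked for `F` itself: on the plane take `F` radial; on the
half-plane every isometry preserving it fixes the inner unit normal `e₁`, so take `F` radial about
`3 e₁` and supported in the unit ball around that point.
-/

open Function Filter Topology Module Pointwise
open scoped ContDiff InnerProductSpace

theorem linearIndependent_of_pairwise_disjoint_support {ι X K : Type*} [Field K]
    {v : ι → X → K} (hv : ∀ i, v i ≠ 0) (hd : Pairwise (Disjoint on fun i => support (v i))) :
    LinearIndependent K v := by
  classical
  rw [linearIndependent_iff']
  intro s c hsum i hi
  obtain ⟨x, hx⟩ := Function.ne_iff.1 (hv i)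
  have hj : ∀ j ∈ s, j ≠ i → c j * v j x = 0 := fun j _ hji => by
    rw [notMem_support.1 fun hxj => (hd hji).ne_of_mem hxj hx rfl, mul_zero]
  have := congrFun hsum x
  simp only [Finset.sum_apply, Pi.smul_apply, smul_eq_mul, Pi.zero_apply] at this
  rw [Finset.sum_eq_single_of_mem i hi hj] at this
  exact (mul_eq_zero.1 this).resolve_right hx

section Dilation

variable {E : Type*} [NormedAddCommGroup E] [NormedSpace ℝ E]

def dilate (R : ℝ) (F : E → ℝ) : E → ℝ := fun x => F (R⁻¹ • x)

variable {F : E → ℝ} {R : ℝ}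

theorem ContDiff.dilate {n : WithTop ℕ∞} (hF : ContDiff ℝ n F) (R : ℝ) :
    ContDiff ℝ n (dilate R F) :=
  hF.comp (contDiff_const_smul R⁻¹)

theorem HasCompactSupport.dilate (hF : HasCompactSupport F) (hR : R ≠ 0) :
    HasCompactSupport (dilate R F) :=
  hF.comp_smul (inv_ne_zero hR)

theorem tsupport_dilate (hR : R ≠ 0) : tsupport (dilate R F) = R • tsupport F := by
  rw [tsupport, tsupport, ← closure_smul₀, ← support_comp_inv_smul₀ hR]; rfl

theorem support_dilate_subset {a b : ℝ} (hF : support F ⊆ norm ⁻¹' Ioo a b) (hR : 0 < R) :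
    support (dilate R F) ⊆ norm ⁻¹' Ioo (R * a) (R * b) := by
  intro x hx
  obtain ⟨ha, hb⟩ : a < ‖R⁻¹ • x‖ ∧ ‖R⁻¹ • x‖ < b := hF hx
  rw [norm_smul, Real.norm_of_nonneg (inv_nonneg.2 hR.le), inv_mul_eq_div] at ha hb
  exact ⟨(lt_div_iff₀' hR).1 ha, (div_lt_iff₀' hR).1 hb⟩

theorem dilate_ne_zero (hF : F ≠ 0) (hR : R ≠ 0) : dilate R F ≠ 0 := by
  obtain ⟨x, hx⟩ := Function.ne_iff.1 hF
  refine Function.ne_iff.2 ⟨R • x, ?_⟩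
  simpa [dilate, smul_smul, inv_mul_cancel₀ hR] using hx

theorem dilate_comp_linearMap {𝓕 : Type*} [FunLike 𝓕 E E] [LinearMapClass 𝓕 ℝ E E] (g : 𝓕)
    (hg : ∀ x, F (g x) = F x) (x : E) : dilate R F (g x) = dilate R F x := by
  rw [dilate, ← map_smul, hg, dilate]

theorem fderiv_dilate (x : E) : fderiv ℝ (dilate R F) x = R⁻¹ • fderiv ℝ F (R⁻¹ • x) :=
  fderiv_comp_smul R⁻¹

end Dilation

section Energy

variable {E : Type*} [NormedAddCommGroup E] [NormedSpace ℝ E] [MeasurableSpace E]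

def energy (μ : Measure E) (v : E → ℝ) : ℝ := ∫ x, (‖fderiv ℝ v x‖ ^ 2 - v x ^ 2) ∂μ

variable {μ : Measure E} {F : E → ℝ}

theorem energy_eq_setIntegral {s : Set E} (hs : tsupport F ⊆ s) :
    energy μ F = ∫ x in s, (‖fderiv ℝ F x‖ ^ 2 - F x ^ 2) ∂μ := by
  refine (setIntegral_eq_integral_of_forall_compl_eq_zero fun x hx => ?_).symm
  have hx' : x ∉ tsupport F := fun h => hx (hs h)
  rw [fderiv_of_notMem_tsupport ℝ hx', image_eq_zero_of_notMem_tsupport hx']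
  simp

variable [FiniteDimensional ℝ E] [BorelSpace E] [μ.IsAddHaarMeasure]

theorem energy_dilate (hF : ContDiff ℝ 1 F) (hcs : HasCompactSupport F) {R : ℝ} (hR : 0 < R) :
    energy μ (dilate R F) =
      R ^ finrank ℝ E * (R⁻¹ ^ 2 * ∫ x, ‖fderiv ℝ F x‖ ^ 2 ∂μ - ∫ x, F x ^ 2 ∂μ) := by
  have hv := hF.dilate R
  have hvc := hcs.dilate hR.ne'
  have hgrad : Integrable (fun x => ‖fderiv ℝ (dilate R F) x‖ ^ 2) μ := by
    have hcs' : HasCompactSupport fun x => ‖fderiv ℝ (dilate R F) x‖ ^ 2 :=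
      (hvc.fderiv ℝ).norm.comp_left (g := fun t : ℝ => t ^ 2) (zero_pow two_ne_zero)
    exact ((hv.continuous_fderiv one_ne_zero).norm.pow 2).integrable_of_hasCompactSupport hcs'
  have hsq : Integrable (fun x => dilate R F x ^ 2) μ := by
    have hcs' : HasCompactSupport fun x => dilate R F x ^ 2 :=
      hvc.comp_left (g := fun t : ℝ => t ^ 2) (zero_pow two_ne_zero)
    exact (hv.continuous.pow 2).integrable_of_hasCompactSupport hcs'
  have hgrad_eq : ∫ x, ‖fderiv ℝ (dilate R F) x‖ ^ 2 ∂μ =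
      R ^ finrank ℝ E * (R⁻¹ ^ 2 * ∫ x, ‖fderiv ℝ F x‖ ^ 2 ∂μ) := by
    simp only [fderiv_dilate, norm_smul, mul_pow, Real.norm_eq_abs, sq_abs]
    rw [integral_const_mul, Measure.integral_comp_inv_smul_of_nonneg μ
      (fun y => ‖fderiv ℝ F y‖ ^ 2) hR.le, smul_eq_mul]
    ring
  have hsq_eq : ∫ x, dilate R F x ^ 2 ∂μ = R ^ finrank ℝ E * ∫ x, F x ^ 2 ∂μ :=
    Measure.integral_comp_inv_smul_of_nonneg μ (fun y => F y ^ 2) hR.le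
  rw [energy, integral_sub hgrad hsq, hgrad_eq, hsq_eq, mul_sub]

theorem eventually_energy_dilate_neg (hF : ContDiff ℝ 1 F) (hcs : HasCompactSupport F)
    (hF0 : F ≠ 0) : ∀ᶠ R in atTop, energy μ (dilate R F) < 0 := by
  obtain ⟨x, hx⟩ := Function.ne_iff.1 hF0
  have hmass : 0 < ∫ x, F x ^ 2 ∂μ := by
    have hcs' : HasCompactSupport fun x => F x ^ 2 :=
      hcs.comp_left (g := fun t : ℝ => t ^ 2) (zero_pow two_ne_zero)
    have hnonneg : 0 ≤ fun x => F x ^ 2 := fun x => sq_nonneg (F x)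
    exact (hF.continuous.pow 2).integral_pos_of_hasCompactSupport_nonneg_nonzero hcs' hnonneg
      (pow_ne_zero 2 hx)
  have hlim : Tendsto (fun R : ℝ => R⁻¹ ^ 2 * ∫ x, ‖fderiv ℝ F x‖ ^ 2 ∂μ - ∫ x, F x ^ 2 ∂μ)
      atTop (𝓝 (0 ^ 2 * ∫ x, ‖fderiv ℝ F x‖ ^ 2 ∂μ - ∫ x, F x ^ 2 ∂μ)) :=
    ((tendsto_inv_atTop_zero.pow 2).mul_const _).sub_const _
  filter_upwards [hlim.eventually_lt_const (show _ < (0 : ℝ) by simpa using hmass),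
    eventually_gt_atTop 0] with R hneg hR
  rw [energy_dilate hF hcs hR]
  exact mul_neg_of_pos_of_neg (pow_pos hR _) hneg

theorem exists_linearIndependent_dilate_energy_neg {a : ℝ} (ha : 1 ≤ a)
    (hF : ContDiff ℝ 1 F) (hcs : HasCompactSupport F) (hF0 : F ≠ 0)
    (hann : support F ⊆ norm ⁻¹' Ioo 1 a) :
    ∃ R : ℕ → ℝ, (∀ n, 0 < R n) ∧ LinearIndependent ℝ (fun n => dilate (R n) F) ∧
      ∀ n, energy μ (dilate (R n) F) < 0 := by
  obtain ⟨R₀, hR₀⟩ := eventually_atTop.1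
    ((eventually_energy_dilate_neg (μ := μ) hF hcs hF0).and (eventually_gt_atTop 0))
  have hpos : 0 < R₀ := (hR₀ R₀ le_rfl).2
  have hge : ∀ n : ℕ, R₀ ≤ R₀ * a ^ n := fun n =>
    le_mul_of_one_le_right hpos.le (one_le_pow₀ ha)
  have hmono : Monotone fun n : ℕ => R₀ * a ^ n := fun i j hij =>
    mul_le_mul_of_nonneg_left (pow_le_pow_right₀ ha hij) hpos.le
  refine ⟨fun n => R₀ * a ^ n, fun n => (hR₀ _ (hge n)).2, ?_, fun n => (hR₀ _ (hge n)).1⟩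
  refine linearIndependent_of_pairwise_disjoint_support
    (fun n => dilate_ne_zero hF0 (hR₀ _ (hge n)).2.ne') fun i j hij => ?_
  have hsupp : ∀ n : ℕ, support (dilate (R₀ * a ^ n) F) ⊆
      norm ⁻¹' Ioo (R₀ * a ^ n) (R₀ * a ^ Order.succ n) := fun n => by
    simpa [pow_succ, mul_assoc] using support_dilate_subset hann (hR₀ _ (hge n)).2
  exact ((hmono.pairwise_disjoint_on_Ioo_succ hij).preimage _).mono (hsupp i) (hsupp j)

end Energy

section ShellBump

variable {E : Type*} [NormedAddCommGroup E]

def unitBump (c : ℝ) : ContDiffBump c := ⟨1 / 2, 1, by norm_num, by norm_num⟩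

def shellBump (c : ℝ) (p : E) : E → ℝ := fun x => unitBump c (‖x - p‖ ^ 2)

variable {c : ℝ} {p : E}

theorem contDiff_shellBump [InnerProductSpace ℝ E] : ContDiff ℝ ∞ (shellBump c p) :=
  (unitBump c).contDiff.comp ((contDiff_norm_sq ℝ).comp (contDiff_id.sub contDiff_const))

theorem support_shellBump : support (shellBump c p) = {x | |‖x - p‖ ^ 2 - c| < 1} := by
  ext x
  change ‖x - p‖ ^ 2 ∈ support (unitBump c) ↔ _
  rw [(unitBump c).support_eq, mem_ball, Real.dist_eq]
  rfl

theorem shellBump_of_norm_sq_eq {x : E} (hx : ‖x - p‖ ^ 2 = c) : shellBump c p x = 1 :=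
  (unitBump c).one_of_mem_closedBall (by simp [hx, unitBump])

theorem shellBump_ne_zero {x : E} (hx : ‖x - p‖ ^ 2 = c) : shellBump c p ≠ 0 :=
  Function.ne_iff.2 ⟨x, by simp [shellBump_of_norm_sq_eq hx]⟩

theorem hasCompactSupport_shellBump [ProperSpace E] : HasCompactSupport (shellBump c p) := by
  refine HasCompactSupport.intro (isCompact_closedBall p (max 1 (c + 1))) fun x hx => ?_
  by_contra hne
  have hmem : |‖x - p‖ ^ 2 - c| < 1 := support_shellBump.subset hne
  have hlt : ‖x - p‖ ^ 2 < c + 1 := by linarith [(abs_lt.1 hmem).2]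
  rw [mem_closedBall, dist_eq_norm, not_le, max_lt_iff] at hx
  nlinarith [hx.1, hx.2]

theorem support_shellBump_four_zero_subset :
    support (shellBump 4 (0 : E)) ⊆ norm ⁻¹' Ioo 1 4 := by
  intro x hx
  have hmem : |‖x - 0‖ ^ 2 - 4| < 1 := support_shellBump.subset hx
  rw [sub_zero, abs_lt] at hmem
  constructor <;> nlinarith [norm_nonneg x]

theorem support_shellBump_zero_subset_ball : support (shellBump 0 p) ⊆ ball p 1 := by
  intro x hx
  have hmem : |‖x - p‖ ^ 2 - 0| < 1 := support_shellBump.subset hx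
  rw [sub_zero, abs_of_nonneg (sq_nonneg _)] at hmem
  rw [mem_ball, dist_eq_norm]
  nlinarith [norm_nonneg (x - p)]

theorem shellBump_comp_isometry {g : E → E} (hg : Isometry g) (hp : g p = p) (x : E) :
    shellBump c p (g x) = shellBump c p x := by
  rw [shellBump, shellBump, ← dist_eq_norm, ← dist_eq_norm, ← hp, hg.dist_eq, hp]

end ShellBump

theorem eq_of_norm_eq_of_inner_pos_imp {E : Type*} [NormedAddCommGroup E]
    [InnerProductSpace ℝ E] {u w : E} (hnorm : ‖u‖ = ‖w‖)
    (h : ∀ x, 0 < ⟪u, x⟫_ℝ → 0 < ⟪w, x⟫_ℝ) : u = w := by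
  by_contra hne
  -- Since the norms agree, `⟪u, d⟫ = ‖d‖² / 2 = -⟪w, d⟫` for `d = u - w`.
  set d := u - w
  have hd : 0 < ‖d‖ := norm_pos_iff.2 (sub_ne_zero.2 hne)
  have hsub : ⟪u, d⟫_ℝ - ⟪w, d⟫_ℝ = ‖d‖ ^ 2 := by
    rw [← inner_sub_left, real_inner_self_eq_norm_sq]
  have hadd : ⟪u, d⟫_ℝ + ⟪w, d⟫_ℝ = 0 := by
    simp only [d, inner_sub_right, real_inner_self_eq_norm_sq, real_inner_comm u w, hnorm]
    ring
  have := h d (by nlinarith)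
  nlinarith

theorem LinearIsometryEquiv.apply_eq_self_of_mapsTo_inner_pos {E : Type*} [NormedAddCommGroup E]
    [InnerProductSpace ℝ E] (g : E ≃ₗᵢ[ℝ] E) {e : E}
    (hg : MapsTo g {x | 0 < ⟪e, x⟫_ℝ} {x | 0 < ⟪e, x⟫_ℝ}) : g e = e := by
  have h : e = g.symm e := eq_of_norm_eq_of_inner_pos_imp (g.symm.norm_map e).symm fun x hx => by
    have : 0 < ⟪e, g x⟫_ℝ := hg hx
    rwa [← g.inner_map_map (g.symm e) x, g.apply_symm_apply]
  exact (g.symm_apply_eq.1 h.symm).symm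

theorem halfPlane_eq : halfPlane = {x : Plane | 0 < ⟪EuclideanSpace.single 1 1, x⟫_ℝ} := by
  ext x
  simp [halfPlane, EuclideanSpace.inner_single_left]

theorem LinearIsometryEquiv.apply_single_one_of_image_halfPlane (g : Plane ≃ₗᵢ[ℝ] Plane)
    (hg : g '' halfPlane ⊆ halfPlane) :
    g (EuclideanSpace.single 1 1) = EuclideanSpace.single 1 1 :=
  g.apply_eq_self_of_mapsTo_inner_pos (halfPlane_eq ▸ mapsTo_iff_image_subset.2 hg)

theorem smul_mem_halfPlane {R : ℝ} (hR : 0 < R) {x : Plane} (hx : x ∈ halfPlane) :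
    R • x ∈ halfPlane :=
  mul_pos hR hx

theorem closedBall_subset_halfPlane {p : Plane} {r : ℝ} (hr : r < p 1) :
    closedBall p r ⊆ halfPlane := by
  intro x hx
  have h : |x 1 - p 1| ≤ r := by
    simpa using (PiLp.norm_apply_le (x - p) 1).trans (mem_closedBall_iff_norm.1 hx)
  show 0 < x 1
  linarith [neg_abs_le (x 1 - p 1)]

section Profile

variable {E : Type*} [NormedAddCommGroup E] [NormedSpace ℝ E]

/-- The annulus condition is what makes the dilates by powers of `4` disjointly supported. -/
structure IsAdmissibleProfile (Sig : Set E) (G : Set (E ≃ₗᵢ[ℝ] E)) (F : E → ℝ) : Prop where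
  contDiff : ContDiff ℝ ∞ F
  hasCompactSupport : HasCompactSupport F
  ne_zero : F ≠ 0
  support_subset : support F ⊆ norm ⁻¹' Ioo 1 4
  comp_eq : ∀ g ∈ G, ∀ x, F (g x) = F x
  tsupport_dilate_subset : ∀ R, 0 < R → tsupport (dilate R F) ⊆ Sig

theorem IsAdmissibleProfile.exists_linearIndependent_energy_neg [FiniteDimensional ℝ E]
    [MeasurableSpace E] [BorelSpace E] {Sig : Set E} {G : Set (E ≃ₗᵢ[ℝ] E)} {F : E → ℝ}
    (hF : IsAdmissibleProfile Sig G F) (μ : Measure E) [μ.IsAddHaarMeasure] (m : ℕ) :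
    ∃ v : Fin m → (E → ℝ), LinearIndependent ℝ v ∧
      ∀ i : Fin m,
        ((∀ n : ℕ, ContDiff ℝ n (v i)) ∧ HasCompactSupport (v i) ∧ tsupport (v i) ⊆ Sig) ∧
        (∀ g ∈ G, ∀ x : E, v i (g x) = v i x) ∧
        (∫ x in Sig, (‖fderiv ℝ (v i) x‖ ^ 2 - (v i x) ^ 2) ∂μ) < 0 := by
  obtain ⟨R, hR, hli, hneg⟩ := exists_linearIndependent_dilate_energy_neg (μ := μ)
    (by norm_num) (hF.contDiff.of_le (by norm_num)) hF.hasCompactSupport hF.ne_zero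
    hF.support_subset
  refine ⟨fun i => dilate (R i) F, hli.comp _ Fin.val_injective, fun i => ⟨⟨?_, ?_, ?_⟩, ?_, ?_⟩⟩
  · exact contDiff_infty.1 (hF.contDiff.dilate _)
  · exact hF.hasCompactSupport.dilate (hR i).ne'
  · exact hF.tsupport_dilate_subset _ (hR i)
  · exact fun g hg => dilate_comp_linearMap g (hF.comp_eq g hg)
  · rw [← energy_eq_setIntegral (hF.tsupport_dilate_subset _ (hR i))]
    exact hneg i

end Profile

theorem isAdmissibleProfile_univ {E : Type*} [NormedAddCommGroup E] [InnerProductSpace ℝ E]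
    [FiniteDimensional ℝ E] [Nontrivial E] (G : Set (E ≃ₗᵢ[ℝ] E)) :
    IsAdmissibleProfile univ G (shellBump 4 0) := by
  obtain ⟨x, hx⟩ := exists_norm_eq E (by norm_num : (0 : ℝ) ≤ 2)
  exact ⟨contDiff_shellBump, hasCompactSupport_shellBump,
    shellBump_ne_zero (x := x) (by rw [sub_zero, hx]; norm_num),
    support_shellBump_four_zero_subset, fun g _ => shellBump_comp_isometry g.isometry (map_zero g),
    fun _ _ => subset_univ _⟩

theorem isAdmissibleProfile_halfPlane {G : Set (Plane ≃ₗᵢ[ℝ] Plane)}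
    (hG : ∀ g ∈ G, (⇑g) '' halfPlane = halfPlane) :
    IsAdmissibleProfile halfPlane G (shellBump 0 ((3 : ℝ) • EuclideanSpace.single 1 1)) := by
  set p : Plane := (3 : ℝ) • EuclideanSpace.single 1 1
  have hp : ‖p‖ = 3 := by simp [p, norm_smul]
  have htsupport : tsupport (shellBump 0 p) ⊆ halfPlane :=
    (closure_minimal (support_shellBump_zero_subset_ball.trans ball_subset_closedBall)
      isClosed_closedBall).trans (closedBall_subset_halfPlane (by simp [p]))
  refine ⟨contDiff_shellBump, hasCompactSupport_shellBump,
    shellBump_ne_zero (x := p) (by simp), fun x hx => ?_, fun g hg => ?_, fun R hR => ?_⟩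
  · have hxp : ‖x - p‖ < 1 := mem_ball_iff_norm.1 (support_shellBump_zero_subset_ball hx)
    have := abs_norm_sub_norm_le x p
    constructor <;> linarith [abs_lt.1 (this.trans_lt hxp)]
  · refine shellBump_comp_isometry g.isometry ?_
    rw [map_smul, g.apply_single_one_of_image_halfPlane (hG g hg).subset]
  · rw [tsupport_dilate hR.ne']
    rintro _ ⟨y, hy, rfl⟩
    exact smul_mem_halfPlane hR (htsupport hy)

theorem infinite_G_morse_index_limit_problem_general
    (Sig : Set Plane) (hSig : Sig = Set.univ ∨ Sig = halfPlane)
    (G : Subgroup (Plane ≃ₗᵢ[ℝ] Plane))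
    (hG : ∀ g ∈ G, (⇑g) '' Sig = Sig) :
    ∀ m : ℕ, ∃ v : Fin m → (Plane → ℝ), LinearIndependent ℝ v ∧
      ∀ i : Fin m,
        ((∀ n : ℕ, ContDiff ℝ n (v i)) ∧ HasCompactSupport (v i) ∧ tsupport (v i) ⊆ Sig) ∧
        (∀ g ∈ G, ∀ x : Plane, v i (g x) = v i x) ∧
        (∫ x in Sig, (‖fderiv ℝ (v i) x‖ ^ 2 - (v i x) ^ 2)) < 0 := by
  rcases hSig with rfl | rfl
  · exact (isAdmissibleProfile_univ (E := Plane) G).exists_linearIndependent_energy_neg volume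
  · exact (isAdmissibleProfile_halfPlane hG).exists_linearIndependent_energy_neg volume

theorem infinite_G_morse_index_limit_problem
    (Sig : Set Plane) (hSig : Sig = Set.univ ∨ Sig = halfPlane)
    (G : Subgroup (Plane ≃ₗᵢ[ℝ] Plane))
    (hG : ∀ g ∈ G, (⇑g) '' Sig = Sig)
    (u : Plane → ℝ) (hreg : ContDiffOn ℝ 2 u Sig)
    (hequ : ∀ x ∈ Sig, - lap u x = u x)
    (hbd : ∀ x ∈ frontier Sig, u x = 0)
    (hnt : ∃ x ∈ Sig, u x ≠ 0) :
    ∀ m : ℕ, ∃ v : Fin m → (Plane → ℝ), LinearIndependent ℝ v ∧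
      ∀ i : Fin m,
        ((∀ n : ℕ, ContDiff ℝ n (v i)) ∧ HasCompactSupport (v i) ∧ tsupport (v i) ⊆ Sig) ∧
        (∀ g ∈ G, ∀ x : Plane, v i (g x) = v i x) ∧
        (∫ x in Sig, (‖fderiv ℝ (v i) x‖ ^ 2 - (v i x) ^ 2)) < 0 :=
  infinite_G_morse_index_limit_problem_general Sig hSig G hG

end
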